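/- arXiv:2110.11034 — 2 statements merged into one kernel-verified Lean document; each statement's English description precedes it below -/
import Mathlib

section
/- Terminating and diverging executions are mutually exclusive: if exec σ s σ' o is derivable (inductively) then the coinductive diverging execution execinf σ s is not derivable. -/
set_option autoImplicit true

def MIN : Int := -2147483648
def MAX : Int := 2147483647

abbrev Store := String → Option Int

def Store.update (x : String) (v : Option Int) (σ : Store) : Store :=
  fun y => if x = y then v else σ y

def emptyStore : Store := fun _ => none

def WellBounded (σ : Store) : Prop := ∀ x z, σ x = some z → MIN ≤ z ∧ z ≤ MAX

def inBounds (z : Int) : Prop := MIN ≤ z ∧ z ≤ MAX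

instance : DecidablePred inBounds := fun z => by unfold inBounds; infer_instance

inductive Expr where
  | tt | ff
  | lit (z : Int)
  | var (x : String)
  | add (e₁ e₂ : Expr)
  | sub (e₁ e₂ : Expr)
  | div (e₁ e₂ : Expr)
  | lt (e₁ e₂ : Expr)
  | le (e₁ e₂ : Expr)
  | eq (e₁ e₂ : Expr)
  | ne (e₁ e₂ : Expr)

def evalZ : Expr → Store → Option Int
  | .lit z, _ => if inBounds z then some z else none
  | .var x, σ => σ x
  | .add e₁ e₂, σ =>
      match evalZ e₁ σ, evalZ e₂ σ with
      | some z₁, some z₂ => if inBounds (z₁ + z₂) then some (z₁ + z₂) else none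
      | _, _ => none
  | .sub e₁ e₂, σ =>
      match evalZ e₁ σ, evalZ e₂ σ with
      | some z₁, some z₂ => if inBounds (z₁ - z₂) then some (z₁ - z₂) else none
      | _, _ => none
  | .div e₁ e₂, σ =>
      match evalZ e₁ σ, evalZ e₂ σ with
      | some z₁, some z₂ =>
          if z₂ ≠ 0 ∧ ¬(z₁ = MIN ∧ z₂ = -1) then some (Int.tdiv z₁ z₂) else none
      | _, _ => none
  | _, _ => none

def evalBool : Expr → Store → Option Bool
  | .tt, _ => some true
  | .ff, _ => some false
  | .lt e₁ e₂, σ =>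
      match evalZ e₁ σ, evalZ e₂ σ with
      | some z₁, some z₂ => some (decide (z₁ < z₂))
      | _, _ => none
  | .le e₁ e₂, σ =>
      match evalZ e₁ σ, evalZ e₂ σ with
      | some z₁, some z₂ => some (decide (z₁ ≤ z₂))
      | _, _ => none
  | .eq e₁ e₂, σ =>
      match evalZ e₁ σ, evalZ e₂ σ with
      | some z₁, some z₂ => some (decide (z₁ = z₂))
      | _, _ => none
  | .ne e₁ e₂, σ =>
      match evalZ e₁ σ, evalZ e₂ σ with
      | some z₁, some z₂ => some (decide (z₁ ≠ z₂))
      | _, _ => none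
  | _, _ => none

inductive Stmt where
  | skip
  | seq (s₁ s₂ : Stmt)
  | letin (x : String) (e : Expr) (s : Stmt)
  | assign (x : String) (e : Expr)
  | ifte (e : Expr) (s₁ s₂ : Stmt)
  | ret (e : Expr)
  | while (c inv : Expr) (s : Stmt)
  | block (s : Stmt)

inductive Outcome where
  | normal
  | ret (z : Int)

inductive Exec : Store → Stmt → Store → Outcome → Prop where
  | skip : Exec σ .skip σ .normal
  | seqN : Exec σ s₁ σ' .normal → Exec σ' s₂ σ'' o → Exec σ (.seq s₁ s₂) σ'' o
  | seqA : Exec σ s₁ σ' o → o ≠ .normal → Exec σ (.seq s₁ s₂) σ' o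
  | letin : σ x = none → evalZ e σ = some z →
      Exec (Store.update x (some z) σ) s σ' o →
      Exec σ (.letin x e s) (Store.update x none σ') o
  | assign : evalZ e σ = some z →
      Exec σ (.assign x e) (Store.update x (some z) σ) .normal
  | ifT : evalBool e σ = some true → Exec σ s₁ σ' o → Exec σ (.ifte e s₁ s₂) σ' o
  | ifF : evalBool e σ = some false → Exec σ s₂ σ' o → Exec σ (.ifte e s₁ s₂) σ' o
  | ret : evalZ e σ = some z → Exec σ (.ret e) σ (.ret z)
  | whileTA : evalBool c σ = some true → Exec σ s σ' o → o ≠ .normal →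
      Exec σ (.while c i s) σ' o
  | whileTN : evalBool c σ = some true → Exec σ s σ' .normal →
      Exec σ' (.while c i s) σ'' o → Exec σ (.while c i s) σ'' o
  | whileF : evalBool c σ = some false → Exec σ (.while c i s) σ .normal
  | block : Exec σ s σ' o → Exec σ (.block s) σ' o

/-- One step of the divergence functional; `Execinf` is its greatest fixpoint,
faithfully encoding the coinductive diverging-execution relation. -/
inductive ExecinfF (R : Store → Stmt → Prop) : Store → Stmt → Prop where
  | seq₁ : R σ s₁ → ExecinfF R σ (.seq s₁ s₂)
  | seq₂ : Exec σ s₁ σ' .normal → R σ' s₂ → ExecinfF R σ (.seq s₁ s₂)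
  | letin : σ x = none → evalZ e σ = some z → R (Store.update x (some z) σ) s →
      ExecinfF R σ (.letin x e s)
  | ifT : evalBool e σ = some true → R σ s₁ → ExecinfF R σ (.ifte e s₁ s₂)
  | ifF : evalBool e σ = some false → R σ s₂ → ExecinfF R σ (.ifte e s₁ s₂)
  | whileBody : evalBool c σ = some true → R σ s → ExecinfF R σ (.while c i s)
  | whileLoop : evalBool c σ = some true → Exec σ s σ' .normal →
      R σ' (.while c i s) → ExecinfF R σ (.while c i s)
  | block : R σ s → ExecinfF R σ (.block s)

def Execinf (σ : Store) (s : Stmt) : Prop :=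
  ∃ R : Store → Stmt → Prop, (∀ σ' s', R σ' s' → ExecinfF R σ' s') ∧ R σ s

/-! Induction on the terminating derivation. Unfolding the greatest fixpoint once, a divergence
of a compound statement is a divergence of a sub-statement from a store at which, by the
terminating derivation, that sub-statement terminates; the inductive hypothesis excludes this.
For `seq` and `while` the divergent continuation starts from the store left by a normal run of
the first part, and determinism of `Exec` identifies it with the terminating run's store (and
rules it out altogether when that run ended in a `return`). -/

theorem Exec.det {σ s σ₁ o₁ σ₂ o₂} (h₁ : Exec σ s σ₁ o₁) (h₂ : Exec σ s σ₂ o₂) :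
    σ₁ = σ₂ ∧ o₁ = o₂ := by
  induction h₁ generalizing σ₂ o₂ with
  | seqN _ _ ih₁ ih₂ =>
    cases h₂ with
    | seqN h₁' h₂' => obtain ⟨rfl, -⟩ := ih₁ h₁'; exact ih₂ h₂'
    | seqA h₁' hne => exact absurd (ih₁ h₁').2.symm hne
  | whileTN _ _ _ ih₁ ih₂ =>
    cases h₂ with
    | whileTN _ h₁' h₂' => obtain ⟨rfl, -⟩ := ih₁ h₁'; exact ih₂ h₂'
    | whileTA _ h₁' hne => exact absurd (ih₁ h₁').2.symm hne
    | whileF _ => simp_all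
  | _ => cases h₂ <;> grind

theorem ExecinfF.mono {R S : Store → Stmt → Prop} (hRS : ∀ σ s, R σ s → S σ s) {σ s}
    (h : ExecinfF R σ s) : ExecinfF S σ s := by
  cases h with
  | seq₁ h => exact .seq₁ (hRS _ _ h)
  | seq₂ h₁ h => exact .seq₂ h₁ (hRS _ _ h)
  | letin hx he h => exact .letin hx he (hRS _ _ h)
  | ifT he h => exact .ifT he (hRS _ _ h)
  | ifF he h => exact .ifF he (hRS _ _ h)
  | whileBody hc h => exact .whileBody hc (hRS _ _ h)
  | whileLoop hc h₁ h => exact .whileLoop hc h₁ (hRS _ _ h)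
  | block h => exact .block (hRS _ _ h)

theorem Execinf.unfold {σ s} (h : Execinf σ s) : ExecinfF Execinf σ s :=
  let ⟨R, hR, hr⟩ := h
  (hR σ s hr).mono fun _ _ hr' => ⟨R, hR, hr'⟩

theorem exec_not_execinf {σ s σ' o} (h : Exec σ s σ' o) : ¬ Execinf σ s := by
  induction h with
  | seqN h₁ _ ih₁ ih₂ =>
    intro hinf
    cases hinf.unfold with
    | seq₁ hinf₁ => exact ih₁ hinf₁
    | seq₂ h₁' hinf₂ => obtain ⟨rfl, -⟩ := h₁.det h₁'; exact ih₂ hinf₂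
  | whileTN _ h₁ _ ih₁ ih₂ =>
    intro hinf
    cases hinf.unfold with
    | whileBody _ hinf₁ => exact ih₁ hinf₁
    | whileLoop _ h₁' hinf₂ => obtain ⟨rfl, -⟩ := h₁.det h₁'; exact ih₂ hinf₂
  | _ => intro hinf; cases hinf.unfold <;> grind [Exec.det]
end

section
/- If symbolic execution of statement s from a well-bounded store σ succeeds with normal continuation C_N and return continuation C_R, and a terminating execution exec σ s σ' o is derivable, then C_N σ' holds when o = Normal, and C_R z σ' holds when o = Return z. -/
set_option autoImplicit true

abbrev SCont := Store → Prop

def evalZCps : Expr → (Int → SCont) → SCont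
  | .lit z, C, σ => if inBounds z then C z σ else False
  | .var x, C, σ =>
      match σ x with
      | some z => C z σ
      | none => False
  | .add e₁ e₂, C, σ =>
      evalZCps e₁ (fun z₁ σ => evalZCps e₂ (fun z₂ σ =>
        MIN ≤ z₁ + z₂ ∧ ((z₁ + z₂ ≤ MAX) ∧ C (z₁ + z₂) σ)) σ) σ
  | .sub e₁ e₂, C, σ =>
      evalZCps e₁ (fun z₁ σ => evalZCps e₂ (fun z₂ σ =>
        MIN ≤ z₁ - z₂ ∧ ((z₁ - z₂ ≤ MAX) ∧ C (z₁ - z₂) σ)) σ) σ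
  | .div e₁ e₂, C, σ =>
      evalZCps e₁ (fun z₁ σ => evalZCps e₂ (fun z₂ σ =>
        z₂ ≠ 0 ∧ ((¬(z₁ = MIN ∧ z₂ = -1)) ∧ C (Int.tdiv z₁ z₂) σ)) σ) σ
  | _, _, _ => False

def evalPropCps : Expr → (Prop → SCont) → SCont
  | .tt, C, σ => C True σ
  | .ff, C, σ => C False σ
  | .lt e₁ e₂, C, σ =>
      evalZCps e₁ (fun z₁ σ => evalZCps e₂ (fun z₂ σ => C (z₁ < z₂) σ) σ) σ
  | .le e₁ e₂, C, σ =>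
      evalZCps e₁ (fun z₁ σ => evalZCps e₂ (fun z₂ σ => C (z₁ ≤ z₂) σ) σ) σ
  | .eq e₁ e₂, C, σ =>
      evalZCps e₁ (fun z₁ σ => evalZCps e₂ (fun z₂ σ => C (z₁ = z₂) σ) σ) σ
  | .ne e₁ e₂, C, σ =>
      evalZCps e₁ (fun z₁ σ => evalZCps e₂ (fun z₂ σ => C (z₁ ≠ z₂) σ) σ) σ
  | _, _, _ => False

def translateZ : Expr → (Int → SCont) → SCont
  | .lit z, C, σ => C z σ
  | .var x, C, σ =>
      match σ x with
      | some z => C z σ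
      | none => False
  | .add e₁ e₂, C, σ =>
      translateZ e₁ (fun z₁ σ => translateZ e₂ (fun z₂ σ => C (z₁ + z₂) σ) σ) σ
  | .sub e₁ e₂, C, σ =>
      translateZ e₁ (fun z₁ σ => translateZ e₂ (fun z₂ σ => C (z₁ - z₂) σ) σ) σ
  | .div e₁ e₂, C, σ =>
      translateZ e₁ (fun z₁ σ => translateZ e₂ (fun z₂ σ => C (Int.tdiv z₁ z₂) σ) σ) σ
  | _, _, _ => False

def translateProp : Expr → (Prop → SCont) → SCont
  | .tt, C, σ => C True σ
  | .ff, C, σ => C False σ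
  | .lt e₁ e₂, C, σ =>
      translateZ e₁ (fun z₁ σ => translateZ e₂ (fun z₂ σ => C (z₁ < z₂) σ) σ) σ
  | .le e₁ e₂, C, σ =>
      translateZ e₁ (fun z₁ σ => translateZ e₂ (fun z₂ σ => C (z₁ ≤ z₂) σ) σ) σ
  | .eq e₁ e₂, C, σ =>
      translateZ e₁ (fun z₁ σ => translateZ e₂ (fun z₂ σ => C (z₁ = z₂) σ) σ) σ
  | .ne e₁ e₂, C, σ =>
      translateZ e₁ (fun z₁ σ => translateZ e₂ (fun z₂ σ => C (z₁ ≠ z₂) σ) σ) σ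
  | _, _, _ => False

def produce (e : Expr) (C : SCont) : SCont :=
  fun σ => translateProp e (fun E σ' => E → C σ') σ

def consume (e : Expr) (C : SCont) : SCont :=
  fun σ => translateProp e (fun E σ' => E ∧ C σ') σ

def leakCheck : SCont := fun _ => True

def freeTargets : Stmt → List String
  | .skip => []
  | .seq s₁ s₂ => freeTargets s₁ ++ freeTargets s₂
  | .letin x _ s => (freeTargets s).filter (· != x)
  | .assign x _ => [x]
  | .ifte _ s₁ s₂ => freeTargets s₁ ++ freeTargets s₂
  | .ret _ => []
  | .while _ _ s => freeTargets s
  | .block s => freeTargets s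

def havocZs : List String → SCont → SCont
  | [], C, σ => C σ
  | x :: xs, C, σ =>
      σ x ≠ none ∧ ∀ z : Int, MIN ≤ z ∧ z ≤ MAX →
        havocZs xs C (Store.update x (some z) σ)

def symExecStmt : Stmt → SCont → (Int → SCont) → SCont
  | .skip, CN, _, σ => CN σ
  | .seq s₁ s₂, CN, CR, σ =>
      symExecStmt s₁ (fun σ' => symExecStmt s₂ CN CR σ') CR σ
  | .ret e, _, CR, σ => evalZCps e CR σ
  | .block s, CN, CR, σ => symExecStmt s CN CR σ
  | .letin x e s, CN, CR, σ =>
      match σ x with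
      | some _ => False
      | none =>
          evalZCps e (fun z σ' =>
            symExecStmt s (fun σ'' => CN (Store.update x none σ''))
              (fun z' σ'' => CR z' (Store.update x none σ''))
              (Store.update x (some z) σ')) σ
  | .assign x e, CN, _, σ =>
      evalZCps e (fun z σ' => CN (Store.update x (some z) σ')) σ
  | .ifte e s₁ s₂, CN, CR, σ =>
      evalPropCps e (fun E σ' =>
        (E → symExecStmt s₁ CN CR σ') ∧ (¬E → symExecStmt s₂ CN CR σ')) σ
  | .while c i s, CN, CR, σ =>
      consume i (havocZs (freeTargets s) (produce i (fun σ' =>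
        evalPropCps c (fun E σ'' =>
          (E → symExecStmt s (consume i leakCheck) CR σ'') ∧
          (¬E → CN σ'')) σ'))) σ

/-! Induction on the execution derivation, with the continuations generalized. Each
CPS evaluator, run on a store, amounts to evaluating the expression and handing the result to
its continuation at that same store; so a succeeding verification condition pins down the
value the concrete semantics computes. For a loop, the condition is recovered at every
iteration: havocking the variables the body may assign subsumes the store the body actually
produces (a body execution never undefines a variable and leaves the other variables alone),
and the invariant it re-establishes is the one the loop consumes again. Well-boundedness of
the store is what lets the havoc be instantiated with the current values. -/

theorem inBounds_tdiv {z₁ z₂ : Int} (h₁ : inBounds z₁) (h₀ : z₂ ≠ 0)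
    (hne : ¬(z₁ = MIN ∧ z₂ = -1)) : inBounds (z₁.tdiv z₂) := by
  unfold inBounds MIN MAX at *
  by_cases hmin : z₁ = -2147483648
  · subst hmin
    obtain rfl | h₂ : z₂ = 1 ∨ 2 ≤ z₂.natAbs := by omega
    · simp
    · have : (Int.tdiv (-2147483648) z₂).natAbs ≤ 2147483648 / 2 := by
        rw [Int.natAbs_tdiv]; exact Nat.div_le_div_left h₂ two_pos
      omega
  · have := Int.natAbs_tdiv_le_natAbs z₁ z₂
    omega

namespace Store

@[simp] theorem update_self (x : String) (v : Option Int) (σ : Store) :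
    Store.update x v σ x = v := if_pos rfl

@[simp] theorem update_of_ne {x y : String} (h : x ≠ y) (v : Option Int) (σ : Store) :
    Store.update x v σ y = σ y := if_neg h

theorem update_eq_self {x : String} {σ : Store} {v : Option Int} (h : σ x = v) :
    Store.update x v σ = σ := by
  funext y
  by_cases hxy : x = y
  · subst hxy; simp [h]
  · simp [hxy]

end Store

theorem WellBounded.update_some {σ : Store} (hσ : WellBounded σ) {z : Int} (hz : inBounds z)
    (x : String) : WellBounded (Store.update x (some z) σ) := by
  intro y w hy
  by_cases hxy : x = y
  · subst hxy; simp only [Store.update_self, Option.some_inj] at hy; exact hy ▸ hz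
  · rw [Store.update_of_ne hxy] at hy; exact hσ y w hy

theorem WellBounded.update_none {σ : Store} (hσ : WellBounded σ) (x : String) :
    WellBounded (Store.update x none σ) := by
  intro y w hy
  by_cases hxy : x = y
  · subst hxy; simp at hy
  · rw [Store.update_of_ne hxy] at hy; exact hσ y w hy

theorem evalZ_inBounds {e : Expr} {σ : Store} {z : Int} (hσ : WellBounded σ)
    (h : evalZ e σ = some z) : inBounds z := by
  induction e generalizing z with
  | lit w =>
    simp only [evalZ, Option.ite_none_right_eq_some, Option.some_inj] at h
    exact h.2 ▸ h.1
  | var x => exact hσ x z h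
  | add e₁ e₂ | sub e₁ e₂ =>
    simp only [evalZ] at h
    rcases h₁ : evalZ e₁ σ with _ | z₁ <;> rcases h₂ : evalZ e₂ σ with _ | z₂ <;>
      simp only [h₁, h₂, Option.ite_none_right_eq_some, Option.some_inj, reduceCtorEq] at h
    exact h.2 ▸ h.1
  | div e₁ e₂ ih₁ =>
    simp only [evalZ] at h
    rcases h₁ : evalZ e₁ σ with _ | z₁ <;> rcases h₂ : evalZ e₂ σ with _ | z₂ <;>
      simp only [h₁, h₂, Option.ite_none_right_eq_some, Option.some_inj, reduceCtorEq] at h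
    exact h.2 ▸ inBounds_tdiv (ih₁ h₁) h.1.1 h.1.2
  | _ => simp [evalZ] at h

theorem evalZCps_iff {e : Expr} {C : Int → SCont} {σ : Store} :
    evalZCps e C σ ↔ ∃ z, evalZ e σ = some z ∧ C z σ := by
  induction e generalizing C with
  | add e₁ e₂ ih₁ ih₂ | sub e₁ e₂ ih₁ ih₂ | div e₁ e₂ ih₁ ih₂ =>
    simp only [evalZCps, evalZ, ih₁, ih₂]
    cases evalZ e₁ σ <;> cases evalZ e₂ σ <;> simp [inBounds, ite_and, and_assoc]
  | var x => simp only [evalZCps, evalZ]; cases σ x <;> simp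
  | _ => simp [evalZCps, evalZ]

theorem evalZCps_of_evalZ {e : Expr} {C : Int → SCont} {σ : Store} {z : Int}
    (h : evalZCps e C σ) (he : evalZ e σ = some z) : C z σ := by
  obtain ⟨z', he', hC⟩ := evalZCps_iff.mp h
  obtain rfl := Option.some_inj.mp (he.symm.trans he')
  exact hC

theorem evalPropCps_iff {e : Expr} {C : Prop → SCont} {σ : Store} :
    evalPropCps e C σ ↔ ∃ b : Bool, evalBool e σ = some b ∧ C (b = true) σ := by
  cases e with
  | lt e₁ e₂ | le e₁ e₂ | eq e₁ e₂ | ne e₁ e₂ =>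
    simp only [evalPropCps, evalBool, evalZCps_iff]
    cases evalZ e₁ σ <;> cases evalZ e₂ σ <;> simp [-Bool.not_eq_eq_eq_not, Bool.not_eq_true']
  | _ => simp [evalPropCps, evalBool]

theorem evalPropCps_of_evalBool {e : Expr} {C : Prop → SCont} {σ : Store} {b : Bool}
    (h : evalPropCps e C σ) (he : evalBool e σ = some b) : C (b = true) σ := by
  obtain ⟨b', he', hC⟩ := evalPropCps_iff.mp h
  obtain rfl := Option.some_inj.mp (he.symm.trans he')
  exact hC

-- The value `translateZ` hands to its continuation: `evalZ` without the overflow checks.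
def denoteZ : Expr → Store → Option Int
  | .lit z, _ => some z
  | .var x, σ => σ x
  | .add e₁ e₂, σ => Option.map₂ (· + ·) (denoteZ e₁ σ) (denoteZ e₂ σ)
  | .sub e₁ e₂, σ => Option.map₂ (· - ·) (denoteZ e₁ σ) (denoteZ e₂ σ)
  | .div e₁ e₂, σ => Option.map₂ Int.tdiv (denoteZ e₁ σ) (denoteZ e₂ σ)
  | _, _ => none

def denoteProp : Expr → Store → Option Prop
  | .tt, _ => some True
  | .ff, _ => some False
  | .lt e₁ e₂, σ => Option.map₂ (· < ·) (denoteZ e₁ σ) (denoteZ e₂ σ)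
  | .le e₁ e₂, σ => Option.map₂ (· ≤ ·) (denoteZ e₁ σ) (denoteZ e₂ σ)
  | .eq e₁ e₂, σ => Option.map₂ (· = ·) (denoteZ e₁ σ) (denoteZ e₂ σ)
  | .ne e₁ e₂, σ => Option.map₂ (· ≠ ·) (denoteZ e₁ σ) (denoteZ e₂ σ)
  | _, _ => none

theorem translateZ_iff {e : Expr} {C : Int → SCont} {σ : Store} :
    translateZ e C σ ↔ ∃ z, denoteZ e σ = some z ∧ C z σ := by
  induction e generalizing C with
  | var x => simp only [translateZ, denoteZ]; cases σ x <;> simp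
  | _ => simp [translateZ, denoteZ, Option.map₂_eq_some_iff, *]

theorem translateProp_iff {e : Expr} {C : Prop → SCont} {σ : Store} :
    translateProp e C σ ↔ ∃ P, denoteProp e σ = some P ∧ C P σ := by
  cases e with
  | tt | ff => exact ⟨fun h => ⟨_, rfl, h⟩, by rintro ⟨_, ⟨⟩, h⟩; exact h⟩
  | _ => simp [translateProp, denoteProp, translateZ_iff, Option.map₂_eq_some_iff, -eq_iff_iff]

namespace Exec

variable {σ σ' : Store} {s : Stmt} {o : Outcome}

theorem wellBounded (h : Exec σ s σ' o) (hσ : WellBounded σ) : WellBounded σ' := by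
  induction h with
  | letin _ he _ ih => exact (ih (hσ.update_some (evalZ_inBounds hσ he) _)).update_none _
  | assign he => exact hσ.update_some (evalZ_inBounds hσ he) _
  | seqN _ _ ih₁ ih₂ | whileTN _ _ _ ih₁ ih₂ => exact ih₂ (ih₁ hσ)
  | seqA _ _ ih | ifT _ _ ih | ifF _ _ ih | whileTA _ _ _ ih | block _ ih => exact ih hσ
  | skip | ret _ | whileF _ => exact hσ

theorem ne_none {x : String} (h : Exec σ s σ' o) (hx : σ x ≠ none) : σ' x ≠ none := by
  induction h with
  | @letin _ _ _ y _ _ _ hy _ _ ih =>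
    have hxy : y ≠ x := fun hxy => hx (hxy ▸ hy)
    rw [Store.update_of_ne hxy]
    exact ih (by rwa [Store.update_of_ne hxy])
  | @assign _ _ _ y _ =>
    by_cases hxy : y = x
    · subst hxy; simp
    · rwa [Store.update_of_ne hxy]
  | seqN _ _ ih₁ ih₂ | whileTN _ _ _ ih₁ ih₂ => exact ih₂ (ih₁ hx)
  | seqA _ _ ih | ifT _ _ ih | ifF _ _ ih | whileTA _ _ _ ih | block _ ih => exact ih hx
  | skip | ret _ | whileF _ => exact hx

theorem eq_of_not_mem_freeTargets {x : String} (h : Exec σ s σ' o)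
    (hx : x ∉ freeTargets s) : σ' x = σ x := by
  induction h with
  | @letin _ _ _ y _ _ _ hy _ _ ih =>
    by_cases hxy : y = x
    · subst hxy; simp [hy]
    · simp only [freeTargets, List.mem_filter, bne_iff_ne, ne_eq, not_and, not_not] at hx
      rw [Store.update_of_ne hxy, ih (fun hmem => hxy (hx hmem).symm), Store.update_of_ne hxy]
  | assign _ =>
    simp only [freeTargets, List.mem_singleton] at hx
    exact Store.update_of_ne (Ne.symm hx) _ _
  | seqN _ _ ih₁ ih₂ =>
    simp only [freeTargets, List.mem_append, not_or] at hx
    rw [ih₂ hx.2, ih₁ hx.1]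
  | whileTN _ _ _ ih₁ ih₂ => rw [ih₂ hx, ih₁ hx]
  | seqA _ _ ih | ifT _ _ ih =>
    simp only [freeTargets, List.mem_append, not_or] at hx
    exact ih hx.1
  | ifF _ _ ih =>
    simp only [freeTargets, List.mem_append, not_or] at hx
    exact ih hx.2
  | whileTA _ _ _ ih | block _ ih => exact ih hx
  | skip | ret _ | whileF _ => rfl

end Exec

theorem havocZs_self {xs : List String} {K : SCont} {σ : Store} (hσ : WellBounded σ)
    (h : havocZs xs K σ) : K σ := by
  induction xs with
  | nil => exact h
  | cons x xs ih =>
    obtain ⟨hx, h⟩ := h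
    obtain ⟨z, hz⟩ := Option.ne_none_iff_exists'.mp hx
    have := h z (hσ x z hz)
    rw [Store.update_eq_self hz] at this
    exact ih this

theorem havocZs_of_agree {xs : List String} {K : SCont} {σ σ₁ : Store} (h : havocZs xs K σ)
    (hdom : ∀ x, σ x ≠ none → σ₁ x ≠ none) (hagree : ∀ x, x ∉ xs → σ₁ x = σ x) :
    havocZs xs K σ₁ := by
  induction xs generalizing σ σ₁ with
  | nil =>
    rwa [show σ₁ = σ from funext fun x => hagree x List.not_mem_nil]
  | cons x xs ih =>
    obtain ⟨hx, h⟩ := h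
    refine ⟨hdom x hx, fun z hz => ih (h z hz) (fun y hy => ?_) (fun y hy => ?_)⟩
    all_goals by_cases hxy : x = y
    · subst hxy; simp
    · rw [Store.update_of_ne hxy] at hy ⊢; exact hdom y hy
    · subst hxy; simp
    · rw [Store.update_of_ne hxy, Store.update_of_ne hxy]
      exact hagree y (by simp [hy, Ne.symm hxy])

section While

variable {c i : Expr} {s : Stmt} {CN : SCont} {CR : Int → SCont} {σ : Store}

theorem symExecStmt_while_guard (hσ : WellBounded σ)
    (h : symExecStmt (.while c i s) CN CR σ) :
    evalPropCps c (fun E σ' =>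
      (E → symExecStmt s (consume i leakCheck) CR σ') ∧ (¬E → CN σ')) σ := by
  obtain ⟨P, hP, hPtrue, hhavoc⟩ := translateProp_iff.mp h
  obtain ⟨P', hP', hproduce⟩ := translateProp_iff.mp (havocZs_self hσ hhavoc)
  obtain rfl := Option.some_inj.mp (hP.symm.trans hP')
  exact hproduce hPtrue

theorem symExecStmt_while_of_exec_body {σ₁ : Store} {o : Outcome}
    (h : symExecStmt (.while c i s) CN CR σ) (hbody : Exec σ s σ₁ o)
    (hinv : consume i leakCheck σ₁) : symExecStmt (.while c i s) CN CR σ₁ := by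
  obtain ⟨-, -, -, hhavoc⟩ := translateProp_iff.mp h
  obtain ⟨P, hP, hPtrue, -⟩ := translateProp_iff.mp hinv
  exact translateProp_iff.mpr ⟨P, hP, hPtrue, havocZs_of_agree hhavoc
    (fun _ => hbody.ne_none) (fun _ => hbody.eq_of_not_mem_freeTargets)⟩

end While

theorem symExecStmt_sound_termination {s : Stmt} {CN : SCont} {CR : Int → SCont}
    {σ σ' : Store} {o : Outcome}
    (hwb : WellBounded σ) (hsym : symExecStmt s CN CR σ)
    (hexec : Exec σ s σ' o) :
    (o = .normal → CN σ') ∧ (∀ z, o = .ret z → CR z σ') := by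
  induction hexec generalizing CN CR with
  | skip => exact ⟨fun _ => hsym, fun _ => nofun⟩
  | seqN h₁ _ ih₁ ih₂ => exact ih₂ (h₁.wellBounded hwb) ((ih₁ hwb hsym).1 rfl)
  | seqA _ hne ih => exact ⟨fun h => absurd h hne, (ih hwb hsym).2⟩
  | letin hx he _ ih =>
    simp only [symExecStmt, hx] at hsym
    exact ih (hwb.update_some (evalZ_inBounds hwb he) _) (evalZCps_of_evalZ hsym he)
  | assign he => exact ⟨fun _ => evalZCps_of_evalZ hsym he, fun _ => nofun⟩
  | ret he => exact ⟨nofun, fun _ h => by cases h; exact evalZCps_of_evalZ hsym he⟩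
  | ifT hc _ ih => exact ih hwb ((evalPropCps_of_evalBool hsym hc).1 rfl)
  | ifF hc _ ih => exact ih hwb ((evalPropCps_of_evalBool hsym hc).2 Bool.false_ne_true)
  | whileTA hc _ hne ih =>
    have hsym_body := (evalPropCps_of_evalBool (symExecStmt_while_guard hwb hsym) hc).1 rfl
    exact ⟨fun h => absurd h hne, (ih hwb hsym_body).2⟩
  | whileTN hc hbody _ ih_body ih_loop =>
    have hsym_body := (evalPropCps_of_evalBool (symExecStmt_while_guard hwb hsym) hc).1 rfl
    have hinv := (ih_body hwb hsym_body).1 rfl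
    exact ih_loop (hbody.wellBounded hwb) (symExecStmt_while_of_exec_body hsym hbody hinv)
  | whileF hc =>
    exact ⟨fun _ => (evalPropCps_of_evalBool (symExecStmt_while_guard hwb hsym) hc).2
      Bool.false_ne_true, fun _ => nofun⟩
  | block _ ih => exact ih hwb hsym
end
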